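/- arXiv:2406.03635 — 2 statements merged into one kernel-verified Lean document; each statement's English description precedes it below -/
import Mathlib

section
/- Let D be a tournament missing disjoint paths of length 2 and let C = a_1b_1c_1, …, a_kb_kc_k be a double cycle in Δ(D). Then there exists t ∈ {1,…,k} such that, in the induced subdigraph D[K(C)], |N⁺(b_t)| ≤ |N⁺⁺(b_t)|. -/
namespace SSNC

variable {V : Type*}

/-- The arc relation of an oriented graph: no digons (hence irreflexive). -/
def Oriented (A : V → V → Prop) : Prop := ∀ u v, A u v → ¬ A v u

/-- `u ∈ N⁺⁺(v)`: the second out-neighborhood. -/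
def SecondOut (A : V → V → Prop) (v u : V) : Prop :=
  u ≠ v ∧ ¬ A v u ∧ ∃ w, A v w ∧ A w u

/-- `{u, v}` is a missing edge of the digraph. -/
def IsMissing (A : V → V → Prop) (u v : V) : Prop :=
  u ≠ v ∧ ¬ A u v ∧ ¬ A v u

/-- The losing relation for a fixed labeling of the two pairs: `a→x`, `b→y`,
`y ∉ N⁺(a) ∪ N⁺⁺(a)` and `x ∉ N⁺(b) ∪ N⁺⁺(b)`. -/
def LosesOrd (A : V → V → Prop) (a b x y : V) : Prop :=
  A a x ∧ A b y ∧ ¬ A a y ∧ ¬ SecondOut A a y ∧ ¬ A b x ∧ ¬ SecondOut A b x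

/-- The missing edge `{a,b}` loses to the missing edge `{x,y}` (for some labeling). -/
def Loses (A : V → V → Prop) (a b x y : V) : Prop :=
  LosesOrd A a b x y ∨ LosesOrd A a b y x

/-- Degree of a vertex in the missing graph. -/
noncomputable def mdeg (A : V → V → Prop) (v : V) : ℕ :=
  ({w | IsMissing A v w} : Set V).ncard

/-- The missing graph, as a simple graph. -/
def missingGraph (A : V → V → Prop) : SimpleGraph V where
  Adj u v := IsMissing A u v
  symm := by
    constructor
    rintro u v ⟨h1, h2, h3⟩
    exact ⟨h1.symm, h3, h2⟩
  loopless := by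
    constructor
    rintro v ⟨h1, -, -⟩
    exact h1 rfl

/-- The missing graph is a vertex-disjoint union of paths
(equivalently: acyclic with maximum degree at most 2). -/
def MissingDisjointPaths (A : V → V → Prop) : Prop :=
  (missingGraph A).IsAcyclic ∧ ∀ v, mdeg A v ≤ 2

/-- The missing graph is a vertex-disjoint union of paths on exactly 3 vertices
(equivalently: every missing edge has one endpoint of missing-degree 1 and one of
missing-degree 2). -/
def MissingPaths2 (A : V → V → Prop) : Prop :=
  ∀ u v, IsMissing A u v →
    (mdeg A u = 1 ∧ mdeg A v = 2) ∨ (mdeg A u = 2 ∧ mdeg A v = 1)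

/-- The missing graph is a vertex-disjoint union of paths on 2 or 3 vertices. -/
def MissingPathsLe2 (A : V → V → Prop) : Prop :=
  ∀ u v, IsMissing A u v →
    (mdeg A u = 1 ∧ mdeg A v = 1) ∨ (mdeg A u = 1 ∧ mdeg A v = 2) ∨
    (mdeg A u = 2 ∧ mdeg A v = 1)

/-- Out-degree of the missing edge `{u,v}` in the dependency digraph `Δ(D)`:
the number of missing edges it loses to. -/
noncomputable def outDegDelta (A : V → V → Prop) (u v : V) : ℕ :=
  ({f : Sym2 V | ∃ x y, f = s(x, y) ∧ IsMissing A x y ∧ Loses A u v x y}).ncard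

/-- In-degree of the missing edge `{u,v}` in the dependency digraph `Δ(D)`:
the number of missing edges losing to it. -/
noncomputable def inDegDelta (A : V → V → Prop) (u v : V) : ℕ :=
  ({f : Sym2 V | ∃ x y, f = s(x, y) ∧ IsMissing A x y ∧ Loses A x y u v}).ncard

/-- `C = a₁b₁c₁, …, a_k b_k c_k` is a double cycle in `Δ(D)`: pairwise vertex-disjoint
missing paths of length 2 (`k ≥ 2`), where each of `{aᵢ,bᵢ}, {bᵢ,cᵢ}` loses to each of
`{aᵢ₊₁,bᵢ₊₁}, {bᵢ₊₁,cᵢ₊₁}` (indices modulo `k`). -/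
def IsDoubleCycle (A : V → V → Prop) (k : ℕ) (a b c : ZMod k → V) : Prop :=
  2 ≤ k ∧
  (∀ i, IsMissing A (a i) (b i) ∧ IsMissing A (b i) (c i) ∧ a i ≠ c i) ∧
  (∀ i j, i ≠ j → Disjoint ({a i, b i, c i} : Set V) {a j, b j, c j}) ∧
  (∀ i, Loses A (a i) (b i) (a (i + 1)) (b (i + 1)) ∧
        Loses A (a i) (b i) (b (i + 1)) (c (i + 1)) ∧
        Loses A (b i) (c i) (a (i + 1)) (b (i + 1)) ∧
        Loses A (b i) (c i) (b (i + 1)) (c (i + 1)))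

/-- `K(C)` for a double cycle `C`. -/
def Kset {k : ℕ} (a b c : ZMod k → V) : Set V :=
  {v | ∃ i, v = a i ∨ v = b i ∨ v = c i}

/-- Out-neighborhood in the subdigraph induced on `K`. -/
def outIn (A : V → V → Prop) (K : Set V) (v : V) : Set V := {u | u ∈ K ∧ A v u}

/-- In-neighborhood in the subdigraph induced on `K`. -/
def inIn (A : V → V → Prop) (K : Set V) (v : V) : Set V := {u | u ∈ K ∧ A u v}

/-- Second out-neighborhood in the subdigraph induced on `K`. -/
def secondOutIn (A : V → V → Prop) (K : Set V) (v : V) : Set V :=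
  {u | u ∈ K ∧ u ≠ v ∧ ¬ A v u ∧ ∃ w ∈ K, A v w ∧ A w u}

/-- Second in-neighborhood in the subdigraph induced on `K`. -/
def secondInIn (A : V → V → Prop) (K : Set V) (v : V) : Set V :=
  {u | u ∈ K ∧ u ≠ v ∧ ¬ A u v ∧ ∃ w ∈ K, A u w ∧ A w v}

/-!
Inside `K = K(C)` the only missing edges are `aᵢbᵢ` and `bᵢcᵢ`, so `D[K]` is a tournament
up to these. Write `Tᵢ = {aᵢ, bᵢ, cᵢ}` and let `xᵢ` stand for `aᵢ` or `cᵢ`. If `{xⱼ, bⱼ}` had a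
common out-neighbour `u` in `K`, the losing relation `{xⱼ, bⱼ} → {aⱼ₊₁, bⱼ₊₁}` would make `u` a
common out-neighbour of `{aⱼ₊₁, bⱼ₊₁}` as well, and so on around the cycle until the triple of
`u` is reached, where `b` has no out-neighbour; dually for common in-neighbours. Hence for
`i ≠ j` the vertex `bᵢ` beats either exactly `bⱼ` or exactly `aⱼ, cⱼ` in `Tⱼ`, so the
out-degrees of the `bᵢ` in `D[K]` add up to `3k(k-1)/2` and some `b_t` has out-degree at most
`3(k-1)/2`. On the other hand every vertex of `K` outside `{b_t} ∪ N⁺(b_t) ∪ T_{t+1}` lies in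
`N⁺⁺(b_t)`, and `b_t` beats a vertex of `T_{t+1}`, so `|N⁺(b_t)| + |N⁺⁺(b_t)| ≥ 3k - 3`.
-/

open scoped Function

theorem IsMissing.symm {A : V → V → Prop} {u v : V} (h : IsMissing A u v) : IsMissing A v u :=
  ⟨h.1.symm, h.2.2, h.2.1⟩

theorem ZMod.induction_succ_until {k : ℕ} [NeZero k] {P : ZMod k → Prop} {i j : ZMod k}
    (hj : P j) (step : ∀ m, m ≠ i → P m → P (m + 1)) : P i := by
  have key : ∀ n ≤ (i - j).val, P (j + n) := by
    intro n hn
    induction n with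
    | zero => simpa using hj
    | succ n ih =>
      have hne : j + n ≠ i := by
        intro h
        have : (i - j).val = n := by
          rw [← h, add_sub_cancel_left, ZMod.val_cast_of_lt (by have := ZMod.val_lt (i - j); omega)]
        omega
      simpa [add_assoc] using step _ hne (ih (by omega))
  simpa using key _ le_rfl

theorem ZMod.induction_pred_until {k : ℕ} [NeZero k] {P : ZMod k → Prop} {i j : ZMod k}
    (hj : P j) (step : ∀ m, m + 1 ≠ i → P (m + 1) → P m) : P i := by
  have := ZMod.induction_succ_until (P := fun m => P (-m)) (i := -i) (j := -j) (by simpa) <| by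
    intro m hm h
    have e : -(m + 1) + 1 = -m := by ring
    exact step (-(m + 1)) (by rw [e]; exact fun h' => hm (by rw [← h', neg_neg])) (by rwa [e])
  simpa using this

theorem ncard_eq_sum_ncard_inter {α ι : Type*} [Fintype ι] {T : ι → Set α}
    (hT : Pairwise (Disjoint on T)) (hfin : ∀ i, (T i).Finite) {s : Set α}
    (hs : s ⊆ ⋃ i, T i) : s.ncard = ∑ i, (s ∩ T i).ncard := by
  conv_lhs => rw [← Set.inter_eq_left.mpr hs, Set.inter_iUnion]
  rw [Set.ncard_iUnion_of_finite (fun i => (hfin i).inter_of_right s)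
    (fun i j hij => (hT hij).mono Set.inter_subset_right Set.inter_subset_right),
    finsum_eq_sum_of_fintype]

theorem two_mul_sum_sum_eq {ι : Type*} [Fintype ι] (f : ι → ι → ℕ) (c : ℕ)
    (hdiag : ∀ i, f i i = 0) (hoff : ∀ i j, i ≠ j → f i j + f j i = c) :
    2 * ∑ i, ∑ j, f i j = Fintype.card ι * ((Fintype.card ι - 1) * c) := by
  classical
  have hrow : ∀ i, ∑ j, (f i j + f j i) = (Fintype.card ι - 1) * c := by
    intro i
    rw [← Finset.sum_erase_add _ _ (Finset.mem_univ i), hdiag, add_zero,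
      Finset.sum_congr rfl fun j hj => hoff i j (Finset.ne_of_mem_erase hj).symm,
      Finset.sum_const, Finset.card_erase_of_mem (Finset.mem_univ i), smul_eq_mul,
      Finset.card_univ, add_zero]
  calc 2 * ∑ i, ∑ j, f i j = ∑ i, ∑ j, (f i j + f j i) := by
        rw [two_mul]
        nth_rw 2 [Finset.sum_comm]
        simp only [Finset.sum_add_distrib]
    _ = _ := by simp only [hrow, Finset.sum_const, Finset.card_univ, smul_eq_mul]

section Loses

variable {A : V → V → Prop} {s t p q u z : V}

theorem LosesOrd.symm (h : LosesOrd A s t p q) : LosesOrd A t s q p :=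
  ⟨h.2.1, h.1, h.2.2.2.2.1, h.2.2.2.2.2, h.2.2.1, h.2.2.2.1⟩

theorem Loses.swap_left (h : Loses A s t p q) : Loses A t s p q :=
  h.symm.imp LosesOrd.symm LosesOrd.symm

theorem Loses.swap_right (h : Loses A s t p q) : Loses A s t q p := h.symm

theorem Loses.not_both_to (h : Loses A s t p q) : ¬ (A s p ∧ A t p) := by
  rintro ⟨hs, ht⟩
  rcases h with h | h
  · exact h.2.2.2.2.1 ht
  · exact h.2.2.1 hs

theorem Loses.not_to_both (h : Loses A s t p q) : ¬ (A s p ∧ A s q) := by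
  rintro ⟨hp, hq⟩
  rcases h with h | h
  · exact h.2.2.1 hq
  · exact h.2.2.1 hp

theorem Loses.not_arc_of_common_out (h : Loses A s t p q) (hs : A s u) (ht : A t u)
    (hps : p ≠ s) (hpt : p ≠ t) : ¬ A u p := by
  intro hup
  rcases h with h | h
  · exact h.2.2.2.2.2 ⟨hpt, h.2.2.2.2.1, u, ht, hup⟩
  · exact h.2.2.2.1 ⟨hps, h.2.2.1, u, hs, hup⟩

theorem Loses.not_arc_of_common_in (h : Loses A s t p q) (hp : A u p) (hq : A u q)
    (hps : p ≠ s) (hqs : q ≠ s) : ¬ A s u := by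
  intro hsu
  rcases h with h | h
  · exact h.2.2.2.1 ⟨hqs, h.2.2.1, u, hsu, hq⟩
  · exact h.2.2.2.1 ⟨hps, h.2.2.1, u, hsu, hp⟩

theorem Loses.exists_path_of_adj (h : Loses A s t p q) (hp : A s p ∨ A p s)
    (hq : A s q ∨ A q s) : ∃ w, (w = p ∨ w = q) ∧ A t w ∧ A w s := by
  rcases h with h | h
  · exact ⟨q, Or.inr rfl, h.2.1, hq.resolve_left h.2.2.1⟩
  · exact ⟨p, Or.inl rfl, h.2.1, hp.resolve_left h.2.2.1⟩

theorem LosesOrd.exists_path_of_beats_one (h : LosesOrd A s t p q)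
    (hz : (A z s ∧ A t z) ∨ (A s z ∧ A z t)) (hu : (u = p ∧ A z q) ∨ (u = q ∧ A z p))
    (hqs : q ≠ s) (hpt : p ≠ t) : ∃ w, (w = s ∨ w = t) ∧ A z w ∧ A w u := by
  rcases hz with ⟨hzs, htz⟩ | ⟨hsz, hzt⟩ <;> rcases hu with ⟨rfl, hzq⟩ | ⟨rfl, hzp⟩
  · exact ⟨s, Or.inl rfl, hzs, h.1⟩
  · exact (h.2.2.2.2.2 ⟨hpt, h.2.2.2.2.1, z, htz, hzp⟩).elim
  · exact (h.2.2.2.1 ⟨hqs, h.2.2.1, z, hsz, hzq⟩).elim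
  · exact ⟨t, Or.inr rfl, hzt, h.2.1⟩

theorem Loses.exists_path_of_beats_one (h : Loses A s t p q)
    (hz : (A z s ∧ A t z) ∨ (A s z ∧ A z t)) (hu : (u = p ∧ A z q) ∨ (u = q ∧ A z p))
    (hps : p ≠ s) (hpt : p ≠ t) (hqs : q ≠ s) (hqt : q ≠ t) :
    ∃ w, (w = s ∨ w = t) ∧ A z w ∧ A w u := by
  rcases h with h | h
  · exact h.exists_path_of_beats_one hz hu hqs hpt
  · exact h.exists_path_of_beats_one hz hu.symm hps hqt

end Loses

theorem MissingPaths2.setOf_isMissing_of_mid {A : V → V → Prop} (hP : MissingPaths2 A)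
    {x y z : V} (hxy : IsMissing A x y) (hyz : IsMissing A y z) (hxz : x ≠ z) :
    {w | IsMissing A y w} = {x, z} := by
  have hsub : ({x, z} : Set V) ⊆ {w | IsMissing A y w} := by
    rintro w (rfl | rfl)
    exacts [hxy.symm, hyz]
  have hdeg : mdeg A y = 2 := by
    rcases hP x y hxy with ⟨-, h⟩ | ⟨-, h⟩
    · exact h
    · have := Set.ncard_le_ncard hsub (Set.finite_of_ncard_pos (by unfold mdeg at h; omega))
      rw [Set.ncard_pair hxz] at this
      unfold mdeg at h
      omega
  exact (Set.eq_of_subset_of_ncard_le hsub (by rw [Set.ncard_pair hxz]; exact hdeg.le)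
    (Set.finite_of_ncard_pos (by unfold mdeg at hdeg; omega))).symm

theorem MissingPaths2.setOf_isMissing_of_end {A : V → V → Prop} (hP : MissingPaths2 A)
    {x y z : V} (hxy : IsMissing A x y) (hyz : IsMissing A y z) (hxz : x ≠ z) :
    {w | IsMissing A x w} = {y} := by
  have hy : mdeg A y = 2 := by
    rw [mdeg, hP.setOf_isMissing_of_mid hxy hyz hxz, Set.ncard_pair hxz]
  obtain ⟨w, hw⟩ : ∃ w, {w | IsMissing A x w} = {w} := by
    rcases hP x y hxy with ⟨h, -⟩ | ⟨-, h⟩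
    · exact Set.ncard_eq_one.mp h
    · omega
  have : y ∈ ({w} : Set V) := hw ▸ hxy
  rw [hw, Set.mem_singleton_iff.mp this]

section DoubleCycle

variable {A : V → V → Prop} {k : ℕ} {a b c : ZMod k → V} {i j m : ZMod k} {u v x y : V}

def tri (a b c : ZMod k → V) (i : ZMod k) : Set V := {a i, b i, c i}

@[simp] theorem a_mem_tri : a i ∈ tri a b c i := Or.inl rfl
@[simp] theorem b_mem_tri : b i ∈ tri a b c i := Or.inr (Or.inl rfl)
@[simp] theorem c_mem_tri : c i ∈ tri a b c i := Or.inr (Or.inr rfl)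

theorem mem_tri_of_side (hx : x = a i ∨ x = c i) : x ∈ tri a b c i := by
  rcases hx with rfl | rfl <;> simp

theorem Kset_eq_iUnion : Kset a b c = ⋃ i, tri a b c i := by
  ext; simp [Kset, tri]

theorem mem_Kset_of_mem_tri (hu : u ∈ tri a b c i) : u ∈ Kset a b c := by
  rw [Kset_eq_iUnion]; exact Set.mem_iUnion.mpr ⟨i, hu⟩

theorem IsDoubleCycle.neZero (hC : IsDoubleCycle A k a b c) : NeZero k := ⟨by have := hC.1; omega⟩

theorem IsDoubleCycle.add_one_ne (hC : IsDoubleCycle A k a b c) (i : ZMod k) : i + 1 ≠ i := by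
  have : Fact (1 < k) := ⟨hC.1⟩
  simp

theorem IsDoubleCycle.pairwise_disjoint_tri (hC : IsDoubleCycle A k a b c) :
    Pairwise (Disjoint on tri a b c) := fun i j hij => hC.2.2.1 i j hij

theorem IsDoubleCycle.ne_of_mem_tri (hC : IsDoubleCycle A k a b c) (hij : i ≠ j)
    (hu : u ∈ tri a b c i) (hv : v ∈ tri a b c j) : u ≠ v := fun h =>
  Set.disjoint_left.mp (hC.pairwise_disjoint_tri hij) hu (h ▸ hv)

theorem finite_tri : (tri a b c i).Finite := Set.toFinite ({a i, b i, c i} : Set V)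

theorem IsDoubleCycle.ncard_tri (hC : IsDoubleCycle A k a b c) (i : ZMod k) :
    (tri a b c i).ncard = 3 := by
  obtain ⟨hab, hbc, hac⟩ := hC.2.1 i
  exact Set.ncard_eq_three.mpr ⟨a i, b i, c i, hab.1, hac, hbc.1, rfl⟩

theorem IsDoubleCycle.finite_Kset (hC : IsDoubleCycle A k a b c) : (Kset a b c).Finite := by
  have := hC.neZero
  rw [Kset_eq_iUnion]
  exact Set.finite_iUnion fun _ => finite_tri

theorem IsDoubleCycle.ncard_Kset (hC : IsDoubleCycle A k a b c) : (Kset a b c).ncard = 3 * k := by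
  have := hC.neZero
  rw [ncard_eq_sum_ncard_inter hC.pairwise_disjoint_tri (fun _ => finite_tri)
    Kset_eq_iUnion.subset]
  simp only [Set.inter_eq_right.mpr (Kset_eq_iUnion ▸ Set.subset_iUnion (tri a b c) _),
    hC.ncard_tri, Finset.sum_const, Finset.card_univ, ZMod.card, smul_eq_mul, mul_comm]

theorem IsDoubleCycle.mem_tri_of_isMissing (hP : MissingPaths2 A) (hC : IsDoubleCycle A k a b c)
    (hu : u ∈ tri a b c i) (huv : IsMissing A u v) : v ∈ tri a b c i := by
  obtain ⟨hab, hbc, hac⟩ := hC.2.1 i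
  have hv : v ∈ {w | IsMissing A u w} := huv
  rcases hu with rfl | rfl | rfl
  · rw [hP.setOf_isMissing_of_end hab hbc hac] at hv
    simp_all
  · rw [hP.setOf_isMissing_of_mid hab hbc hac] at hv
    rcases hv with rfl | rfl <;> simp
  · rw [hP.setOf_isMissing_of_end hbc.symm hab.symm hac.symm] at hv
    simp_all

theorem IsDoubleCycle.adj (hP : MissingPaths2 A) (hC : IsDoubleCycle A k a b c) (hij : i ≠ j)
    (hu : u ∈ tri a b c i) (hv : v ∈ tri a b c j) : A u v ∨ A v u := by
  by_contra! h
  exact hC.ne_of_mem_tri hij (hC.mem_tri_of_isMissing hP hu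
    ⟨hC.ne_of_mem_tri hij hu hv, h.1, h.2⟩) hv rfl

theorem IsDoubleCycle.arc_of_not_arc (hP : MissingPaths2 A) (hC : IsDoubleCycle A k a b c)
    (hij : i ≠ j) (hu : u ∈ tri a b c i) (hv : v ∈ tri a b c j) (h : ¬ A v u) : A u v :=
  (hC.adj hP hij hu hv).resolve_right h

theorem IsDoubleCycle.not_arc_b_of_mem_tri (hA : Oriented A) (hC : IsDoubleCycle A k a b c)
    (hu : u ∈ tri a b c i) : ¬ A (b i) u ∧ ¬ A u (b i) := by
  obtain ⟨hab, hbc, -⟩ := hC.2.1 i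
  rcases hu with rfl | rfl | rfl
  · exact ⟨hab.2.2, hab.2.1⟩
  · exact ⟨fun h => hA _ _ h h, fun h => hA _ _ h h⟩
  · exact ⟨hbc.2.1, hbc.2.2⟩

theorem IsDoubleCycle.loses_side (hC : IsDoubleCycle A k a b c) (hx : x = a i ∨ x = c i)
    (hy : y = a (i + 1) ∨ y = c (i + 1)) : Loses A x (b i) y (b (i + 1)) := by
  obtain ⟨L1, L2, L3, L4⟩ := hC.2.2.2 i
  rcases hx with rfl | rfl <;> rcases hy with rfl | rfl
  exacts [L1, L2.swap_right, L3.swap_left, L4.swap_left.swap_right]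

theorem IsDoubleCycle.no_common_out_neighbor (hA : Oriented A) (hP : MissingPaths2 A)
    (hC : IsDoubleCycle A k a b c) (hx : x = a j ∨ x = c j) (hu : u ∈ Kset a b c) :
    ¬ (A x u ∧ A (b j) u) := by
  have := hC.neZero
  rw [Kset_eq_iUnion, Set.mem_iUnion] at hu
  obtain ⟨i, hi⟩ := hu
  intro hxu
  obtain ⟨-, -, -, hbu⟩ : ∃ x, (x = a i ∨ x = c i) ∧ A x u ∧ A (b i) u := by
    refine ZMod.induction_succ_until
      (P := fun m => ∃ x, (x = a m ∨ x = c m) ∧ A x u ∧ A (b m) u) ⟨x, hx, hxu⟩ ?_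
    rintro m hmi ⟨y, hy, hyu, hbu⟩
    have hsucc := hC.add_one_ne m
    by_cases hm1 : m + 1 = i
    · subst hm1
      exfalso
      rcases hi with rfl | rfl | rfl
      · exact (hC.loses_side hy (Or.inl rfl)).not_both_to ⟨hyu, hbu⟩
      · exact (hC.loses_side hy (Or.inl rfl)).swap_right.not_both_to ⟨hyu, hbu⟩
      · exact (hC.loses_side hy (Or.inr rfl)).not_both_to ⟨hyu, hbu⟩
    have L := hC.loses_side hy (Or.inl rfl)
    have hy' := mem_tri_of_side (b := b) hy
    refine ⟨a (m + 1), Or.inl rfl, ?_, ?_⟩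
    · refine hC.arc_of_not_arc hP hm1 a_mem_tri hi (L.not_arc_of_common_out hyu hbu ?_ ?_)
      exacts [hC.ne_of_mem_tri hsucc a_mem_tri hy',
        hC.ne_of_mem_tri hsucc a_mem_tri b_mem_tri]
    · refine hC.arc_of_not_arc hP hm1 b_mem_tri hi
        (L.swap_right.not_arc_of_common_out hyu hbu ?_ ?_)
      exacts [hC.ne_of_mem_tri hsucc b_mem_tri hy',
        hC.ne_of_mem_tri hsucc b_mem_tri b_mem_tri]
  exact (hC.not_arc_b_of_mem_tri hA hi).1 hbu

theorem IsDoubleCycle.no_common_in_neighbor (hA : Oriented A) (hP : MissingPaths2 A)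
    (hC : IsDoubleCycle A k a b c) (hx : x = a j ∨ x = c j) (hu : u ∈ Kset a b c) :
    ¬ (A u x ∧ A u (b j)) := by
  have := hC.neZero
  rw [Kset_eq_iUnion, Set.mem_iUnion] at hu
  obtain ⟨i, hi⟩ := hu
  intro hux
  obtain ⟨-, -, -, hub⟩ : ∃ x, (x = a i ∨ x = c i) ∧ A u x ∧ A u (b i) := by
    refine ZMod.induction_pred_until
      (P := fun m => ∃ x, (x = a m ∨ x = c m) ∧ A u x ∧ A u (b m)) ⟨x, hx, hux⟩ ?_
    rintro m hmi ⟨y, hy, huy, hub⟩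
    have hsucc := hC.add_one_ne m
    have L := hC.loses_side (Or.inl rfl) hy
    by_cases hmi' : m = i
    · subst hmi'
      exfalso
      rcases hi with rfl | rfl | rfl
      · exact L.not_to_both ⟨huy, hub⟩
      · exact L.swap_left.not_to_both ⟨huy, hub⟩
      · exact (hC.loses_side (Or.inr rfl) hy).not_to_both ⟨huy, hub⟩
    have hy' := mem_tri_of_side (b := b) hy
    refine ⟨a m, Or.inl rfl, ?_, ?_⟩
    · refine hC.arc_of_not_arc hP (Ne.symm hmi') hi a_mem_tri
        (L.not_arc_of_common_in huy hub ?_ ?_)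
      exacts [hC.ne_of_mem_tri hsucc hy' a_mem_tri, hC.ne_of_mem_tri hsucc b_mem_tri a_mem_tri]
    · refine hC.arc_of_not_arc hP (Ne.symm hmi') hi b_mem_tri
        (L.swap_left.not_arc_of_common_in huy hub ?_ ?_)
      exacts [hC.ne_of_mem_tri hsucc hy' b_mem_tri, hC.ne_of_mem_tri hsucc b_mem_tri b_mem_tri]
  exact (hC.not_arc_b_of_mem_tri hA hi).2 hub

theorem IsDoubleCycle.arc_side_b_iff (hA : Oriented A) (hP : MissingPaths2 A)
    (hC : IsDoubleCycle A k a b c) (hij : i ≠ j) (hx : x = a j ∨ x = c j) :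
    A x (b i) ↔ A (b i) (b j) := by
  constructor
  · exact fun hxb => hC.arc_of_not_arc hP hij b_mem_tri b_mem_tri fun hbb =>
      hC.no_common_out_neighbor hA hP hx (mem_Kset_of_mem_tri b_mem_tri) ⟨hxb, hbb⟩
  · exact fun hbb => hC.arc_of_not_arc hP hij.symm (mem_tri_of_side hx) b_mem_tri fun hbx =>
      hC.no_common_in_neighbor hA hP hx (mem_Kset_of_mem_tri b_mem_tri) ⟨hbx, hbb⟩

theorem IsDoubleCycle.arc_b_side_iff (hA : Oriented A) (hP : MissingPaths2 A)
    (hC : IsDoubleCycle A k a b c) (hij : i ≠ j) (hx : x = a j ∨ x = c j) :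
    A (b i) x ↔ A (b j) (b i) := by
  constructor
  · exact fun hbx => hC.arc_of_not_arc hP hij.symm b_mem_tri b_mem_tri fun hbb =>
      hC.no_common_in_neighbor hA hP hx (mem_Kset_of_mem_tri b_mem_tri) ⟨hbx, hbb⟩
  · exact fun hbb => hC.arc_of_not_arc hP hij b_mem_tri (mem_tri_of_side hx) fun hxb =>
      hC.no_common_out_neighbor hA hP hx (mem_Kset_of_mem_tri b_mem_tri) ⟨hxb, hbb⟩

theorem IsDoubleCycle.exists_path_to_side (hP : MissingPaths2 A) (hC : IsDoubleCycle A k a b c)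
    (hx : x = a i ∨ x = c i) : ∃ w ∈ Kset a b c, A (b i) w ∧ A w x := by
  have hne := (hC.add_one_ne i).symm
  have hx' := mem_tri_of_side (b := b) hx
  obtain ⟨w, hw, h1, h2⟩ := (hC.loses_side hx (Or.inl rfl)).exists_path_of_adj
    (hC.adj hP hne hx' a_mem_tri) (hC.adj hP hne hx' b_mem_tri)
  refine ⟨w, ?_, h1, h2⟩
  rcases hw with rfl | rfl
  exacts [mem_Kset_of_mem_tri a_mem_tri, mem_Kset_of_mem_tri b_mem_tri]

theorem IsDoubleCycle.exists_path_of_arc_b (hA : Oriented A) (hP : MissingPaths2 A)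
    (hC : IsDoubleCycle A k a b c) (hu : u ∈ tri a b c (j + 1)) (hji : j ≠ i)
    (hji' : j + 1 ≠ i) (hub : A u (b i)) : ∃ w ∈ Kset a b c, A (b i) w ∧ A w u := by
  obtain ⟨y, hy, hu'⟩ : ∃ y, (y = a (j + 1) ∨ y = c (j + 1)) ∧
      ((u = y ∧ A (b i) (b (j + 1))) ∨ (u = b (j + 1) ∧ A (b i) y)) := by
    rcases hu with rfl | rfl | rfl
    · exact ⟨_, Or.inl rfl,
        Or.inl ⟨rfl, (hC.arc_side_b_iff hA hP hji'.symm (Or.inl rfl)).mp hub⟩⟩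
    · exact ⟨_, Or.inl rfl,
        Or.inr ⟨rfl, (hC.arc_b_side_iff hA hP hji'.symm (Or.inl rfl)).mpr hub⟩⟩
    · exact ⟨_, Or.inr rfl,
        Or.inl ⟨rfl, (hC.arc_side_b_iff hA hP hji'.symm (Or.inr rfl)).mp hub⟩⟩
  have hz : (A (b i) (a j) ∧ A (b j) (b i)) ∨ (A (a j) (b i) ∧ A (b i) (b j)) := by
    rcases hC.adj hP hji.symm b_mem_tri b_mem_tri with h | h
    · exact Or.inr ⟨(hC.arc_side_b_iff hA hP hji.symm (Or.inl rfl)).mpr h, h⟩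
    · exact Or.inl ⟨(hC.arc_b_side_iff hA hP hji.symm (Or.inl rfl)).mpr h, h⟩
  have hy' := mem_tri_of_side (b := b) hy
  have hsucc := hC.add_one_ne j
  obtain ⟨w, hw, h1, h2⟩ := (hC.loses_side (Or.inl rfl) hy).exists_path_of_beats_one hz hu'
    (hC.ne_of_mem_tri hsucc hy' a_mem_tri) (hC.ne_of_mem_tri hsucc hy' b_mem_tri)
    (hC.ne_of_mem_tri hsucc b_mem_tri a_mem_tri) (hC.ne_of_mem_tri hsucc b_mem_tri b_mem_tri)
  refine ⟨w, ?_, h1, h2⟩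
  rcases hw with rfl | rfl
  exacts [mem_Kset_of_mem_tri a_mem_tri, mem_Kset_of_mem_tri b_mem_tri]

theorem IsDoubleCycle.mem_secondOutIn (hA : Oriented A) (hP : MissingPaths2 A)
    (hC : IsDoubleCycle A k a b c) (hu : u ∈ Kset a b c) (hub : u ≠ b i)
    (hnot : ¬ A (b i) u) (hT : u ∉ tri a b c (i + 1)) :
    u ∈ secondOutIn A (Kset a b c) (b i) := by
  refine ⟨hu, hub, hnot, ?_⟩
  obtain ⟨m, hm⟩ := Set.mem_iUnion.mp (Kset_eq_iUnion ▸ hu)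
  by_cases hmi : m = i
  · subst hmi
    rcases hm with h | h | h
    exacts [h ▸ hC.exists_path_to_side hP (Or.inl rfl), (hub h).elim,
      h ▸ hC.exists_path_to_side hP (Or.inr rfl)]
  obtain ⟨j, rfl⟩ : ∃ j, m = j + 1 := ⟨m - 1, (sub_add_cancel m 1).symm⟩
  exact hC.exists_path_of_arc_b hA hP hm (fun h => hT (h ▸ hm)) hmi
    (hC.arc_of_not_arc hP hmi hm b_mem_tri hnot)

theorem IsDoubleCycle.outIn_inter_tri_nonempty (hA : Oriented A) (hP : MissingPaths2 A)
    (hC : IsDoubleCycle A k a b c) (hij : i ≠ j) :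
    (outIn A (Kset a b c) (b i) ∩ tri a b c j).Nonempty := by
  rcases hC.adj hP hij b_mem_tri b_mem_tri with h | h
  · exact ⟨b j, ⟨mem_Kset_of_mem_tri b_mem_tri, h⟩, b_mem_tri⟩
  · exact ⟨a j, ⟨mem_Kset_of_mem_tri a_mem_tri,
      (hC.arc_b_side_iff hA hP hij (Or.inl rfl)).mpr h⟩, a_mem_tri⟩

theorem IsDoubleCycle.three_mul_le_ncard_outIn_add_secondOutIn (hA : Oriented A)
    (hP : MissingPaths2 A) (hC : IsDoubleCycle A k a b c) (i : ZMod k) :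
    3 * k ≤ (outIn A (Kset a b c) (b i)).ncard + (secondOutIn A (Kset a b c) (b i)).ncard + 3 := by
  set O := outIn A (Kset a b c) (b i)
  set S := secondOutIn A (Kset a b c) (b i)
  set T := tri a b c (i + 1)
  have hOfin : O.Finite := hC.finite_Kset.subset fun _ hu => hu.1
  have hSfin : S.Finite := hC.finite_Kset.subset fun _ hu => hu.1
  have hcover : Kset a b c ⊆ insert (b i) (O ∪ T ∪ S) := by
    intro u hu
    by_cases h1 : u = b i
    · exact Or.inl h1
    by_cases h2 : A (b i) u
    · exact Or.inr (Or.inl (Or.inl ⟨hu, h2⟩))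
    by_cases h3 : u ∈ T
    · exact Or.inr (Or.inl (Or.inr h3))
    exact Or.inr (Or.inr (hC.mem_secondOutIn hA hP hu h1 h2 h3))
  have hOT : 1 ≤ (O ∩ T).ncard := (Set.ncard_pos (hOfin.inter_of_left T)).mpr
    (hC.outIn_inter_tri_nonempty hA hP (hC.add_one_ne i).symm)
  have hunion := Set.ncard_union_add_ncard_inter O T hOfin finite_tri
  calc 3 * k = (Kset a b c).ncard := hC.ncard_Kset.symm
    _ ≤ (insert (b i) (O ∪ T ∪ S)).ncard :=
      Set.ncard_le_ncard hcover (((hOfin.union finite_tri).union hSfin).insert _)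
    _ ≤ (O ∪ T).ncard + S.ncard + 1 :=
      (Set.ncard_insert_le _ _).trans (by gcongr; exact Set.ncard_union_le _ _)
    _ ≤ O.ncard + S.ncard + 3 := by rw [hC.ncard_tri] at hunion; omega

theorem IsDoubleCycle.outIn_inter_tri_of_arc (hA : Oriented A) (hP : MissingPaths2 A)
    (hC : IsDoubleCycle A k a b c) (hij : i ≠ j) (h : A (b i) (b j)) :
    outIn A (Kset a b c) (b i) ∩ tri a b c j = {b j} ∧
      outIn A (Kset a b c) (b j) ∩ tri a b c i = {a i, c i} := by
  constructor <;> ext u <;> constructor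
  · rintro ⟨⟨-, hbu⟩, hu | hu | hu⟩ <;> subst hu
    · exact (hA _ _ h ((hC.arc_b_side_iff hA hP hij (Or.inl rfl)).mp hbu)).elim
    · rfl
    · exact (hA _ _ h ((hC.arc_b_side_iff hA hP hij (Or.inr rfl)).mp hbu)).elim
  · rintro rfl
    exact ⟨⟨mem_Kset_of_mem_tri b_mem_tri, h⟩, b_mem_tri⟩
  · rintro ⟨⟨-, hbu⟩, hu | hu | hu⟩ <;> subst hu
    · exact Or.inl rfl
    · exact (hA _ _ h hbu).elim
    · exact Or.inr rfl
  · have hside := hC.arc_b_side_iff hA hP hij.symm (x := u)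
    rintro (rfl | rfl)
    · exact ⟨⟨mem_Kset_of_mem_tri a_mem_tri, (hside (Or.inl rfl)).mpr h⟩, a_mem_tri⟩
    · exact ⟨⟨mem_Kset_of_mem_tri c_mem_tri, (hside (Or.inr rfl)).mpr h⟩, c_mem_tri⟩

theorem IsDoubleCycle.ncard_outIn_inter_tri_add (hA : Oriented A) (hP : MissingPaths2 A)
    (hC : IsDoubleCycle A k a b c) (hij : i ≠ j) :
    (outIn A (Kset a b c) (b i) ∩ tri a b c j).ncard +
      (outIn A (Kset a b c) (b j) ∩ tri a b c i).ncard = 3 := by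
  rcases hC.adj hP hij b_mem_tri b_mem_tri with h | h
  · obtain ⟨h1, h2⟩ := hC.outIn_inter_tri_of_arc hA hP hij h
    rw [h1, h2, Set.ncard_singleton, Set.ncard_pair (hC.2.1 i).2.2]
  · obtain ⟨h1, h2⟩ := hC.outIn_inter_tri_of_arc hA hP hij.symm h
    rw [h1, h2, Set.ncard_singleton, Set.ncard_pair (hC.2.1 j).2.2]

theorem IsDoubleCycle.two_mul_sum_ncard_outIn [NeZero k] (hA : Oriented A)
    (hP : MissingPaths2 A) (hC : IsDoubleCycle A k a b c) :
    2 * ∑ i, (outIn A (Kset a b c) (b i)).ncard = k * ((k - 1) * 3) := by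
  have hdiag : ∀ i, (outIn A (Kset a b c) (b i) ∩ tri a b c i).ncard = 0 := fun i => by
    rw [Set.ncard_eq_zero (hC.finite_Kset.subset fun _ hu => hu.1.1)]
    exact Set.eq_empty_of_forall_notMem fun _ ⟨⟨_, h⟩, hu⟩ =>
      (hC.not_arc_b_of_mem_tri hA hu).1 h
  have hsplit : ∀ i, (outIn A (Kset a b c) (b i)).ncard =
      ∑ j, (outIn A (Kset a b c) (b i) ∩ tri a b c j).ncard := fun i =>
    ncard_eq_sum_ncard_inter hC.pairwise_disjoint_tri (fun _ => finite_tri)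
      (Set.Subset.trans (fun _ hu => hu.1) Kset_eq_iUnion.subset)
  simp only [hsplit]
  rw [two_mul_sum_sum_eq _ 3 hdiag fun i j hij => hC.ncard_outIn_inter_tri_add hA hP hij,
    ZMod.card]

end DoubleCycle

theorem stmt13_general {V : Type*} (A : V → V → Prop) (hA : Oriented A)
    (hP : MissingPaths2 A) (k : ℕ) (a b c : ZMod k → V)
    (hC : IsDoubleCycle A k a b c) (K : Set V) (hK : K = Kset a b c) :
    ∃ t : ZMod k,
      (outIn A K (b t)).ncard ≤ (secondOutIn A K (b t)).ncard := by
  subst hK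
  have := hC.neZero
  obtain ⟨t, -, ht⟩ := Finset.exists_le_of_sum_le Finset.univ_nonempty
    (f := fun i => 2 * (outIn A (Kset a b c) (b i)).ncard) (g := fun _ => (k - 1) * 3) <| by
      rw [← Finset.mul_sum, hC.two_mul_sum_ncard_outIn hA hP, Finset.sum_const,
        Finset.card_univ, ZMod.card, smul_eq_mul]
  have := hC.three_mul_le_ncard_outIn_add_secondOutIn hA hP t
  have := hC.1
  exact ⟨t, by omega⟩

/-- Proposition 4.14: some `b_t` has the SNP in `D[K(C)]`. -/
theorem stmt13 {V : Type*} [Fintype V] (A : V → V → Prop) (hA : Oriented A)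
    (hP : MissingPaths2 A) (k : ℕ) (a b c : ZMod k → V)
    (hC : IsDoubleCycle A k a b c) (K : Set V) (hK : K = Kset a b c) :
    ∃ t : ZMod k,
      (outIn A K (b t)).ncard ≤ (secondOutIn A K (b t)).ncard :=
  stmt13_general A hA hP k a b c hC K hK

end SSNC
end

section
/- Let D be a digraph and let {a_1,b_1}, …, {a_k,b_k} (k ≥ 2) be pairwise vertex-disjoint missing edges of D such that {a_i,b_i} loses to {a_{i+1},b_{i+1}} for all i (indices modulo k), i.e., they form a directed cycle C in Δ(D). Suppose that every missing edge of D having an endpoint in K(C) = {a_i, b_i : 1 ≤ i ≤ k} is one of the pairs {a_i,b_i} (this is the condition K(C) = J(x) for a vertex x of C). Then K(C) is an interval of D: for all u, v ∈ K(C), N⁺(u) ∖ K(C) = N⁺(v) ∖ K(C) and N⁻(u) ∖ K(C) = N⁻(v) ∖ K(C). -/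
/-!
Relabel the `i`-th pair as `(xᵢ, yᵢ)` so that `{xᵢ, yᵢ}` loses to the next pair through the arcs
`xᵢ → yᵢ₊₁` and `yᵢ → xᵢ₊₁`. Since every missing edge meeting `K` is one of the pairs, vertices of
distinct pairs are adjacent and every vertex outside `K` is adjacent to all of `K`. Hence
`xᵢ₊₁ → xᵢ`, and `xᵢ₊₁ ∉ N⁺⁺(xᵢ)` gives `N⁺(xᵢ) ∖ K ⊆ N⁺(xᵢ₊₁) ∖ K`. The same second-neighbourhood
condition propagates the backward arcs to `xᵢ₊ₘ → xᵢ` for `0 < m < k`, so `xᵢ₊ₖ ≠ xᵢ`, i.e.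
`xᵢ₊ₖ = yᵢ`: the sequence `x` runs through all of `K` with period `2k`, and its monotone periodic
sequence of out-neighbourhoods is constant. Outside `K`, in-neighbourhoods are the complements of
out-neighbourhoods.
-/

namespace SSNC

variable {V : Type*}

theorem _root_.Monotone.eq_of_periodic {α : Type*} [PartialOrder α] {f : ℕ → α}
    (hf : Monotone f) {c : ℕ} (hc : Function.Periodic f c) (hc0 : 0 < c) (p q : ℕ) :
    f p = f q := by
  have hle : ∀ p q, f p ≤ f q := fun p q => hc.nat_mul p q ▸ hf (by nlinarith)
  exact le_antisymm (hle p q) (hle q p)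

theorem natCast_ne_natCast_add {k n m : ℕ} (hm : 0 < m) (hmk : m < k) :
    (n : ZMod k) ≠ ((n + m : ℕ) : ZMod k) := by
  rw [Nat.cast_add, Ne, left_eq_add, ZMod.natCast_eq_zero_iff]
  exact fun h => absurd (Nat.le_of_dvd hm h) (by omega)

section Digraph

variable {A : V → V → Prop}

theorem Loses.swap_left_s17 {a b x y : V} (h : Loses A a b x y) : Loses A b a x y := by
  rcases h with ⟨h₁, h₂, h₃, h₄, h₅, h₆⟩ | ⟨h₁, h₂, h₃, h₄, h₅, h₆⟩
  exacts [Or.inr ⟨h₂, h₁, h₅, h₆, h₃, h₄⟩, Or.inl ⟨h₂, h₁, h₅, h₆, h₃, h₄⟩]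

theorem exists_losesOrd_relabeling (p q : ℕ → V)
    (h : ∀ n, Loses A (p n) (q n) (p (n + 1)) (q (n + 1))) :
    ∃ x y : ℕ → V, (∀ n, (x n = p n ∧ y n = q n) ∨ (x n = q n ∧ y n = p n)) ∧
      ∀ n, LosesOrd A (x n) (y n) (y (n + 1)) (x (n + 1)) := by
  classical
  let g : ℕ → V × V := fun n => Nat.rec (p 0, q 0) (fun n xy =>
    if LosesOrd A xy.1 xy.2 (q (n + 1)) (p (n + 1)) then (p (n + 1), q (n + 1))
    else (q (n + 1), p (n + 1))) n
  have hg : ∀ n, g (n + 1) =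
      if LosesOrd A (g n).1 (g n).2 (q (n + 1)) (p (n + 1)) then (p (n + 1), q (n + 1))
      else (q (n + 1), p (n + 1)) := fun n => rfl
  have hrel : ∀ n, ((g n).1 = p n ∧ (g n).2 = q n) ∨ ((g n).1 = q n ∧ (g n).2 = p n) := by
    intro n
    cases n with
    | zero => exact Or.inl ⟨rfl, rfl⟩
    | succ n => rw [hg]; split_ifs <;> simp
  refine ⟨fun n => (g n).1, fun n => (g n).2, hrel, fun n => ?_⟩
  have hloses : Loses A (g n).1 (g n).2 (p (n + 1)) (q (n + 1)) := by
    rcases hrel n with ⟨h₁, h₂⟩ | ⟨h₁, h₂⟩ <;> rw [h₁, h₂]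
    exacts [h n, (h n).swap_left_s17]
  dsimp only
  rw [hg]
  split_ifs with hswap
  · exact hswap
  · exact hloses.resolve_right hswap

theorem not_arc_of_not_secondOut {u v w : V} (h : ¬SecondOut A u v) (hvu : v ≠ u)
    (huv : ¬A u v) (huw : A u w) : ¬A w v :=
  fun hwv => h ⟨hvu, huv, w, huw, hwv⟩

theorem arc_add_of_chain {k : ℕ} {x : ℕ → V}
    (hstep : ∀ n, ¬A (x n) (x (n + 1)) ∧ ¬SecondOut A (x n) (x (n + 1)))
    (hadj : ∀ n m, 0 < m → m < k →
      x n ≠ x (n + m) ∧ (A (x n) (x (n + m)) ∨ A (x (n + m)) (x n))) :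
    ∀ m n, 0 < m → m < k → A (x (n + m)) (x n) := by
  intro m
  induction m with
  | zero => intro n h; omega
  | succ m ih =>
    intro n _ hmk
    refine (hadj n (m + 1) m.succ_pos hmk).2.resolve_left fun hn => ?_
    rcases Nat.eq_zero_or_pos m with rfl | hm
    · exact (hstep n).1 hn
    · have hne := (hadj n 1 one_pos (by omega)).1
      refine not_arc_of_not_secondOut (hstep n).2 (Ne.symm hne) (hstep n).1 hn ?_
      rw [show n + (m + 1) = n + 1 + m by omega]
      exact ih (n + 1) hm (by omega)

theorem ne_add_of_arc_add (hA : Oriented A) {k : ℕ} (hk : 2 ≤ k) {x : ℕ → V}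
    (harc : ∀ m n, 0 < m → m < k → A (x (n + m)) (x n)) (n : ℕ) : x (n + k) ≠ x n := by
  intro h
  have h₁ := harc 1 n one_pos (by omega)
  have h₂ := harc (k - 1) (n + 1) (by omega) (by omega)
  rw [show n + 1 + (k - 1) = n + k by omega, h] at h₂
  exact hA _ _ h₁ h₂

theorem monotone_out_diff {K : Set V} {x : ℕ → V} (hxK : ∀ n, x n ∈ K)
    (hK : ∀ u ∈ K, ∀ w ∉ K, A u w ∨ A w u) (hne : ∀ n, x (n + 1) ≠ x n)
    (hstep : ∀ n, ¬A (x n) (x (n + 1)) ∧ ¬SecondOut A (x n) (x (n + 1))) :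
    Monotone fun n => {w | A (x n) w} \ K :=
  monotone_nat_of_le_succ fun n w ⟨hw, hwK⟩ =>
    ⟨(hK _ (hxK (n + 1)) w hwK).resolve_right
      (not_arc_of_not_secondOut (hstep n).2 (hne n) (hstep n).1 hw), hwK⟩

theorem in_diff_eq_of_out_diff_eq (hA : Oriented A) {K : Set V} {u v : V}
    (hu : ∀ w ∉ K, A u w ∨ A w u) (hv : ∀ w ∉ K, A v w ∨ A w v)
    (h : {w | A u w} \ K = {w | A v w} \ K) : {w | A w u} \ K = {w | A w v} \ K := by
  ext w
  have hw := Set.ext_iff.mp h w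
  simp only [Set.mem_sdiff, Set.mem_ofPred_eq] at hw ⊢
  by_cases hwK : w ∈ K
  · simp [hwK]
  · have := hA u w; have := hA v w; have := hu w hwK; have := hv w hwK
    tauto

section Pairs

variable {ι : Type*} {a b : ι → V} {K : Set V}

theorem arc_or_arc_of_not_mem (hKab : ∀ i, ({a i, b i} : Set V) ⊆ K)
    (hJ : ∀ u v, IsMissing A u v → u ∈ K → ∃ i, ({u, v} : Set V) = ({a i, b i} : Set V))
    {u w : V} (hu : u ∈ K) (hw : w ∉ K) : A u w ∨ A w u := by
  by_contra! h
  obtain ⟨i, hi⟩ := hJ u w ⟨fun huw => hw (huw ▸ hu), h.1, h.2⟩ hu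
  exact hw (hKab i (hi ▸ by simp))

theorem arc_or_arc_of_mem_pair (hKab : ∀ i, ({a i, b i} : Set V) ⊆ K)
    (hdisj : ∀ i j, i ≠ j → Disjoint ({a i, b i} : Set V) ({a j, b j} : Set V))
    (hJ : ∀ u v, IsMissing A u v → u ∈ K → ∃ i, ({u, v} : Set V) = ({a i, b i} : Set V))
    {i j : ι} (hij : i ≠ j) {u v : V} (hu : u ∈ ({a i, b i} : Set V))
    (hv : v ∈ ({a j, b j} : Set V)) : u ≠ v ∧ (A u v ∨ A v u) := by
  have huv : u ≠ v := fun h => Set.disjoint_left.mp (hdisj i j hij) hu (h ▸ hv)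
  refine ⟨huv, ?_⟩
  by_contra! h
  obtain ⟨l, hl⟩ := hJ u v ⟨huv, h.1, h.2⟩ (hKab i hu)
  have hli : l = i := by
    by_contra hne
    exact Set.disjoint_left.mp (hdisj l i hne) (hl ▸ by simp) hu
  have hlj : l = j := by
    by_contra hne
    exact Set.disjoint_left.mp (hdisj l j hne) (hl ▸ by simp) hv
  exact hij (hli.symm.trans hlj)

end Pairs

section Relabeling

variable {k : ℕ} {a b : ZMod k → V} {x y : ℕ → V}

theorem relabeling_add_eq
    (hxy : ∀ n : ℕ, (x n = a n ∧ y n = b n) ∨ (x n = b n ∧ y n = a n))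
    (hne : ∀ n, x (n + k) ≠ x n) (n : ℕ) :
    x (n + k) = y n ∧ y (n + k) = x n := by
  have hnk := hxy (n + k)
  rw [Nat.cast_add, ZMod.natCast_self, add_zero] at hnk
  have := hne n
  rcases hxy n with ⟨h₁, h₂⟩ | ⟨h₁, h₂⟩ <;> rcases hnk with ⟨h₃, h₄⟩ | ⟨h₃, h₄⟩ <;> grind

theorem periodic_of_relabeling
    (hxy : ∀ n : ℕ, (x n = a n ∧ y n = b n) ∨ (x n = b n ∧ y n = a n))
    (hne : ∀ n, x (n + k) ≠ x n) :
    Function.Periodic x (2 * k) :=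
  fun n => by
    rw [two_mul, ← add_assoc, (relabeling_add_eq hxy hne (n + k)).1,
      (relabeling_add_eq hxy hne n).2]

theorem mem_range_of_relabeling [NeZero k]
    (hxy : ∀ n : ℕ, (x n = a n ∧ y n = b n) ∨ (x n = b n ∧ y n = a n))
    (hne : ∀ n, x (n + k) ≠ x n) (i : ZMod k) :
    ({a i, b i} : Set V) ⊆ Set.range x := by
  obtain ⟨n, rfl⟩ := ZMod.natCast_zmod_surjective i
  have hy : y n ∈ Set.range x := ⟨n + k, (relabeling_add_eq hxy hne n).1⟩
  rintro w (rfl | rfl) <;> rcases hxy n with ⟨h₁, h₂⟩ | ⟨h₁, h₂⟩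
  exacts [⟨n, h₁⟩, h₂ ▸ hy, h₂ ▸ hy, ⟨n, h₁⟩]

end Relabeling

end Digraph

theorem stmt17_general {V : Type*} (A : V → V → Prop) (hA : Oriented A)
    (k : ℕ) (hk : 2 ≤ k) (a b : ZMod k → V)
    (hdisj : ∀ i j, i ≠ j → Disjoint ({a i, b i} : Set V) ({a j, b j} : Set V))
    (hcyc : ∀ i, Loses A (a i) (b i) (a (i + 1)) (b (i + 1)))
    (K : Set V) (hK : K = {w | ∃ i, w = a i ∨ w = b i})
    (hJ : ∀ u v, IsMissing A u v → u ∈ K →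
      ∃ i, ({u, v} : Set V) = ({a i, b i} : Set V)) :
    ∀ u ∈ K, ∀ v ∈ K,
      ({w | A u w} : Set V) \ K = ({w | A v w} : Set V) \ K ∧
      ({w | A w u} : Set V) \ K = ({w | A w v} : Set V) \ K := by
  have : NeZero k := ⟨by omega⟩
  have hKab : ∀ i, ({a i, b i} : Set V) ⊆ K := by
    subst hK
    rintro i w (rfl | rfl) <;> exact ⟨i, by simp⟩
  have hjoin : ∀ u ∈ K, ∀ w ∉ K, A u w ∨ A w u :=
    fun u hu w hw => arc_or_arc_of_not_mem hKab hJ hu hw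
  obtain ⟨x, y, hxy, hord⟩ := exists_losesOrd_relabeling (A := A) (fun n : ℕ => a n)
    (fun n => b n) fun n => by simpa using hcyc n
  have hstep : ∀ n, ¬A (x n) (x (n + 1)) ∧ ¬SecondOut A (x n) (x (n + 1)) :=
    fun n => ⟨(hord n).2.2.1, (hord n).2.2.2.1⟩
  have hxab : ∀ n : ℕ, x n ∈ ({a n, b n} : Set V) := fun n => by
    rcases hxy n with ⟨h, -⟩ | ⟨h, -⟩ <;> simp [h]
  have hadj : ∀ n m, 0 < m → m < k →
      x n ≠ x (n + m) ∧ (A (x n) (x (n + m)) ∨ A (x (n + m)) (x n)) := fun n m hm hmk =>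
    arc_or_arc_of_mem_pair hKab hdisj hJ (natCast_ne_natCast_add hm hmk) (hxab n) (hxab _)
  have hne := ne_add_of_arc_add hA hk (arc_add_of_chain hstep hadj)
  have hmono := monotone_out_diff (fun n => hKab _ (hxab n)) hjoin
    (fun n => (hadj n 1 one_pos (by omega)).1.symm) hstep
  have hcover : K ⊆ Set.range x := by
    subst hK
    rintro w ⟨i, hw | hw⟩ <;> exact mem_range_of_relabeling hxy hne i (by simp [hw])
  rintro _ hu _ hv
  obtain ⟨p, rfl⟩ := hcover hu
  obtain ⟨q, rfl⟩ := hcover hv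
  have hper := (periodic_of_relabeling hxy hne).comp fun v => {w | A v w} \ K
  have hout := hmono.eq_of_periodic hper (by omega) p q
  exact ⟨hout, in_diff_eq_of_out_diff_eq hA (hjoin _ hu) (hjoin _ hv) hout⟩

/-- Lemma 4.20: a directed cycle `C` of `Δ(D)` with `K(C) = J(x)` yields an interval. -/
theorem stmt17 {V : Type*} [Fintype V] (A : V → V → Prop) (hA : Oriented A)
    (k : ℕ) (hk : 2 ≤ k) (a b : ZMod k → V)
    (hm : ∀ i, IsMissing A (a i) (b i))
    (hdisj : ∀ i j, i ≠ j → Disjoint ({a i, b i} : Set V) ({a j, b j} : Set V))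
    (hcyc : ∀ i, Loses A (a i) (b i) (a (i + 1)) (b (i + 1)))
    (K : Set V) (hK : K = {w | ∃ i, w = a i ∨ w = b i})
    (hJ : ∀ u v, IsMissing A u v → u ∈ K →
      ∃ i, ({u, v} : Set V) = ({a i, b i} : Set V)) :
    ∀ u ∈ K, ∀ v ∈ K,
      ({w | A u w} : Set V) \ K = ({w | A v w} : Set V) \ K ∧
      ({w | A w u} : Set V) \ K = ({w | A w v} : Set V) \ K :=
  stmt17_general A hA k hk a b hdisj hcyc K hK hJ

end SSNC
end
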